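/- For 0 < r < 1 and 0 ≤ θ ≤ π, the quantity H(r,θ) = 9 + 12r cos θ − 4r² sin²θ − 4r³ cos θ − r⁴ satisfies H(r,θ) ≥ (1−r)(3−r)(3−r²) > 0. -/
import Mathlib

open Real

theorem H_lower_bound (r θ : ℝ) (hr0 : 0 < r) (hr1 : r < 1)
    (hθ0 : 0 ≤ θ) (hθπ : θ ≤ π) :
    (1 - r) * (3 - r) * (3 - r ^ 2) ≤
      9 + 12 * r * Real.cos θ - 4 * r ^ 2 * Real.sin θ ^ 2
        - 4 * r ^ 3 * Real.cos θ - r ^ 4 ∧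
    0 < (1 - r) * (3 - r) * (3 - r ^ 2) := by
  have hc1 : -1 ≤ Real.cos θ := Real.neg_one_le_cos θ
  have hc2 : Real.cos θ ≤ 1 := Real.cos_le_one θ
  have hs : Real.sin θ ^ 2 = 1 - Real.cos θ ^ 2 := Real.sin_sq θ
  constructor
  · nlinarith [mul_nonneg (mul_nonneg hr0.le (by linarith : (0:ℝ) ≤ Real.cos θ + 1))
      (by nlinarith : (0:ℝ) ≤ 3 - r ^ 2 - r * (1 - Real.cos θ))]
  · have h1 : 0 < 1 - r := by linarith
    have h2 : 0 < 3 - r := by linarith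
    have h3 : 0 < 3 - r ^ 2 := by nlinarith
    positivity
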